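/- arXiv:0810.2359 — 5 statements merged into one kernel-verified Lean document; each statement's English description precedes it below -/
import Mathlib

section
/- Let G be a finite simple graph with adjacency matrix M and complement adjacency matrix M̄, and for α, β > 0 set M(α,β) = αM + βM̄. Suppose that for all α, β > 0 one has Q_{M(α²,β²)} ≤ 0 (where Q is the Schoenberg quadratic-form maximum over unit vectors summing to zero). Then G is complete or independent. -/
noncomputable def Q (n : ℕ) (M : Fin n → Fin n → ℝ) : ℝ :=
  sSup {q : ℝ | ∃ x : Fin n → ℝ, ∑ k, x k ^ 2 = 1 ∧ ∑ k, x k = 0 ∧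
    q = ∑ i, ∑ j, if i < j then M i j * x i * x j else 0}

noncomputable def vtx {n : ℕ} (u v w : Fin n) (a b c : ℝ) : Fin n → ℝ :=
  fun k => if k = u then a else if k = v then b else if k = w then c else 0

lemma vtx_sum {n : ℕ} (u v w : Fin n) (a b c : ℝ)
    (huv : u ≠ v) (huw : u ≠ w) (hvw : v ≠ w) :
    ∑ k, vtx u v w a b c k = a + b + c := by
  have he : ∀ k, vtx u v w a b c k =
      (if k = u then a else 0) + (if k = v then b else 0) + (if k = w then c else 0) := by
    intro k
    unfold vtx
    split_ifs <;> simp_all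
  rw [Finset.sum_congr rfl (fun k _ => he k)]
  simp [Finset.sum_add_distrib, Finset.sum_ite_eq']

lemma vtx_sum_sq {n : ℕ} (u v w : Fin n) (a b c : ℝ)
    (huv : u ≠ v) (huw : u ≠ w) (hvw : v ≠ w) :
    ∑ k, (vtx u v w a b c k) ^ 2 = a ^ 2 + b ^ 2 + c ^ 2 := by
  have he : ∀ k, (vtx u v w a b c k) ^ 2 =
      (if k = u then a ^ 2 else 0) + (if k = v then b ^ 2 else 0) +
        (if k = w then c ^ 2 else 0) := by
    intro k
    unfold vtx
    split_ifs <;> simp_all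
  rw [Finset.sum_congr rfl (fun k _ => he k)]
  simp [Finset.sum_add_distrib, Finset.sum_ite_eq']

lemma vtx_pairs {n : ℕ} (M : Fin n → Fin n → ℝ) (hsym : ∀ i j, M i j = M j i)
    (u v w : Fin n) (a b c : ℝ)
    (huv : u ≠ v) (huw : u ≠ w) (hvw : v ≠ w) :
    ∑ i, ∑ j, (if i < j then M i j * vtx u v w a b c i * vtx u v w a b c j else 0)
      = M u v * (a * b) + M u w * (a * c) + M v w * (b * c) := by
  set x := vtx u v w a b c with hx
  have hx0 : ∀ k, k ≠ u → k ≠ v → k ≠ w → x k = 0 := by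
    intro k h1 h2 h3; simp [hx, vtx, h1, h2, h3]
  have hxu : x u = a := by simp [hx, vtx]
  have hxv : x v = b := by simp [hx, vtx, Ne.symm huv]
  have hxw : x w = c := by simp [hx, vtx, Ne.symm huw, Ne.symm hvw]
  have hmemu : u ∉ (insert v {w} : Finset (Fin n)) := by simp [huv, huw]
  have hmemv : v ∉ ({w} : Finset (Fin n)) := by simp [hvw]
  have hexp : ∀ g : Fin n → ℝ, ∑ j ∈ ({u, v, w} : Finset (Fin n)), g j = g u + g v + g w := by
    intro g
    rw [show ({u, v, w} : Finset (Fin n)) = insert u (insert v {w}) from rfl,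
      Finset.sum_insert hmemu, Finset.sum_insert hmemv, Finset.sum_singleton]
    ring
  have houter : ∑ i, ∑ j, (if i < j then M i j * x i * x j else 0)
      = ∑ i ∈ ({u, v, w} : Finset (Fin n)), ∑ j, (if i < j then M i j * x i * x j else 0) := by
    refine (Finset.sum_subset (Finset.subset_univ _) ?_).symm
    intro i _ hi
    simp only [Finset.mem_insert, Finset.mem_singleton, not_or] at hi
    apply Finset.sum_eq_zero
    intro j _
    rw [hx0 i hi.1 hi.2.1 hi.2.2]
    split_ifs <;> ring
  have hinner : ∀ i, ∑ j, (if i < j then M i j * x i * x j else 0)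
      = ∑ j ∈ ({u, v, w} : Finset (Fin n)), (if i < j then M i j * x i * x j else 0) := by
    intro i
    refine (Finset.sum_subset (Finset.subset_univ _) ?_).symm
    intro j _ hj
    simp only [Finset.mem_insert, Finset.mem_singleton, not_or] at hj
    rw [hx0 j hj.1 hj.2.1 hj.2.2]
    split_ifs <;> ring
  rw [houter]
  rw [Finset.sum_congr rfl (fun i _ => hinner i)]
  rw [hexp (fun i => ∑ j ∈ ({u, v, w} : Finset (Fin n)), (if i < j then M i j * x i * x j else 0))]
  rw [hexp, hexp, hexp]
  simp only [hxu, hxv, hxw, lt_irrefl, if_neg (lt_irrefl u), if_neg (lt_irrefl v),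
    if_neg (lt_irrefl w)]
  rcases huv.lt_or_gt with h1 | h1 <;> rcases huw.lt_or_gt with h2 | h2 <;>
    rcases hvw.lt_or_gt with h3 | h3 <;>
    simp [h1, h2, h3, asymm h1, asymm h2, asymm h3, hsym v u, hsym w u, hsym w v] <;> ring

lemma mem_le_Q {n : ℕ} (M : Fin n → Fin n → ℝ) (hM : ∀ i j, 0 ≤ M i j ∧ M i j ≤ 10)
    {q : ℝ}
    (hq : q ∈ {q : ℝ | ∃ x : Fin n → ℝ, ∑ k, x k ^ 2 = 1 ∧ ∑ k, x k = 0 ∧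
      q = ∑ i, ∑ j, if i < j then M i j * x i * x j else 0}) :
    q ≤ Q n M := by
  apply le_csSup _ hq
  refine ⟨10 * n * n, ?_⟩
  rintro r ⟨x, hx1, hx2, rfl⟩
  have hxb : ∀ k, x k ^ 2 ≤ 1 := by
    intro k
    rw [← hx1]
    exact Finset.single_le_sum (f := fun k => x k ^ 2) (fun i _ => sq_nonneg _)
      (Finset.mem_univ k)
  calc ∑ i, ∑ j, (if i < j then M i j * x i * x j else 0)
      ≤ ∑ i : Fin n, ∑ j : Fin n, (10 : ℝ) := by
        refine Finset.sum_le_sum fun i _ => Finset.sum_le_sum fun j _ => ?_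
        split_ifs with hij
        · nlinarith [hxb i, hxb j, (hM i j).1, (hM i j).2, sq_nonneg (x i - x j),
            sq_nonneg (x i + x j)]
        · norm_num
    _ = 10 * n * n := by
        simp [Finset.sum_const, Finset.card_univ]
        ring

theorem stmt_6 (n : ℕ) (G : SimpleGraph (Fin n)) [DecidableRel G.Adj]
    (h : ∀ α β : ℝ, 0 < α → 0 < β →
      Q n (fun i j =>
        α ^ 2 * (if G.Adj i j then 1 else 0) +
        β ^ 2 * (if i ≠ j ∧ ¬G.Adj i j then 1 else 0)) ≤ 0) :
    (∀ x y : Fin n, x ≠ y → G.Adj x y) ∨ (∀ x y : Fin n, ¬G.Adj x y) := by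
  by_contra hcon
  push_neg at hcon
  obtain ⟨⟨p, q', hpq, hnpq⟩, r, s, hrs⟩ := hcon
  -- find u, v, w with Adj u v, ¬ Adj u w, u ≠ w
  have htriple : ∃ u v w : Fin n, G.Adj u v ∧ ¬ G.Adj u w ∧ u ≠ w := by
    by_contra htr
    push_neg at htr
    have key : ∀ a b c : Fin n, G.Adj a b → a ≠ c → G.Adj a c := by
      intro a b c ha hne
      by_contra hn
      exact hne (htr a b c ha hn)
    have hrp : r ≠ p := by
      rintro rfl
      exact hnpq (key r s q' hrs hpq)
    have hrq : G.Adj r p := key r s p hrs hrp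
    have hpq' : G.Adj p q' := key p r q' hrq.symm hpq
    exact hnpq hpq'
  obtain ⟨u, v, w, hadj, hnadj, huw⟩ := htriple
  have huv : u ≠ v := G.ne_of_adj hadj
  have hvw : v ≠ w := by rintro rfl; exact hnadj hadj
  set t : ℝ := Real.sqrt (1 / 6) with htdef
  have ht2 : t ^ 2 = 1 / 6 := Real.sq_sqrt (by norm_num)
  by_cases hvwadj : G.Adj v w
  · -- use α = 1, β = 3, x = (t, -2t, t) on (u, v, w)
    set M : Fin n → Fin n → ℝ := fun i j =>
      (1 : ℝ) ^ 2 * (if G.Adj i j then 1 else 0) +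
      (3 : ℝ) ^ 2 * (if i ≠ j ∧ ¬G.Adj i j then 1 else 0) with hMdef
    have hsym : ∀ i j, M i j = M j i := by
      intro i j
      by_cases hij : G.Adj i j
      · simp [hMdef, hij, hij.symm]
      · by_cases he : i = j
        · subst he; rfl
        · have hji : ¬ G.Adj j i := fun h' => hij h'.symm
          simp [hMdef, hij, hji, he, Ne.symm he]
    have hMuv : M u v = 1 := by simp [hMdef, hadj]
    have hMuw : M u w = 9 := by simp [hMdef, hnadj, huw]; norm_num
    have hMvw : M v w = 1 := by simp [hMdef, hvwadj]
    have hval : ∑ i, ∑ j, (if i < j then M i j * vtx u v w t (-2 * t) t i *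
        vtx u v w t (-2 * t) t j else 0) = 5 / 6 := by
      rw [vtx_pairs M hsym u v w t (-2 * t) t huv huw hvw, hMuv, hMuw, hMvw]
      nlinarith [ht2]
    have hmem : (5 / 6 : ℝ) ∈ {q : ℝ | ∃ x : Fin n → ℝ, ∑ k, x k ^ 2 = 1 ∧ ∑ k, x k = 0 ∧
        q = ∑ i, ∑ j, if i < j then M i j * x i * x j else 0} := by
      refine ⟨vtx u v w t (-2 * t) t, ?_, ?_, hval.symm⟩
      · rw [vtx_sum_sq u v w t (-2 * t) t huv huw hvw]; nlinarith [ht2]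
      · rw [vtx_sum u v w t (-2 * t) t huv huw hvw]; ring
    have hMb : ∀ i j, 0 ≤ M i j ∧ M i j ≤ 10 := by
      intro i j
      constructor <;> simp only [hMdef] <;> split_ifs <;> norm_num
    have := mem_le_Q M hMb hmem
    have hQ := h 1 3 (by norm_num) (by norm_num)
    rw [show (fun i j =>
        (1:ℝ) ^ 2 * (if G.Adj i j then 1 else 0) +
        (3:ℝ) ^ 2 * (if i ≠ j ∧ ¬G.Adj i j then 1 else 0)) = M from rfl] at hQ
    linarith
  · -- use α = 3, β = 1, x = (t, t, -2t) on (u, v, w)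
    set M : Fin n → Fin n → ℝ := fun i j =>
      (3 : ℝ) ^ 2 * (if G.Adj i j then 1 else 0) +
      (1 : ℝ) ^ 2 * (if i ≠ j ∧ ¬G.Adj i j then 1 else 0) with hMdef
    have hsym : ∀ i j, M i j = M j i := by
      intro i j
      by_cases hij : G.Adj i j
      · simp [hMdef, hij, hij.symm]
      · by_cases he : i = j
        · subst he; rfl
        · have hji : ¬ G.Adj j i := fun h' => hij h'.symm
          simp [hMdef, hij, hji, he, Ne.symm he]
    have hMuv : M u v = 9 := by simp [hMdef, hadj]; norm_num
    have hMuw : M u w = 1 := by simp [hMdef, hnadj, huw]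
    have hMvw : M v w = 1 := by simp [hMdef, hvwadj, hvw]
    have hval : ∑ i, ∑ j, (if i < j then M i j * vtx u v w t t (-2 * t) i *
        vtx u v w t t (-2 * t) j else 0) = 5 / 6 := by
      rw [vtx_pairs M hsym u v w t t (-2 * t) huv huw hvw, hMuv, hMuw, hMvw]
      nlinarith [ht2]
    have hmem : (5 / 6 : ℝ) ∈ {q : ℝ | ∃ x : Fin n → ℝ, ∑ k, x k ^ 2 = 1 ∧ ∑ k, x k = 0 ∧
        q = ∑ i, ∑ j, if i < j then M i j * x i * x j else 0} := by
      refine ⟨vtx u v w t t (-2 * t), ?_, ?_, hval.symm⟩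
      · rw [vtx_sum_sq u v w t t (-2 * t) huv huw hvw]; nlinarith [ht2]
      · rw [vtx_sum u v w t t (-2 * t) huv huw hvw]; ring
    have hMb : ∀ i j, 0 ≤ M i j ∧ M i j ≤ 10 := by
      intro i j
      constructor <;> simp only [hMdef] <;> split_ifs <;> norm_num
    have := mem_le_Q M hMb hmem
    have hQ := h 3 1 (by norm_num) (by norm_num)
    rw [show (fun i j =>
        (3:ℝ) ^ 2 * (if G.Adj i j then 1 else 0) +
        (1:ℝ) ^ 2 * (if i ≠ j ∧ ¬G.Adj i j then 1 else 0)) = M from rfl] at hQ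
    linarith
end

section
/- Every finite simple graph G is representable in ℝ^{|G|−1}, i.e., there exists f : V(G) → ℝ^{|G|−1} such that ‖f(x) − f(x')‖ = ‖f(y) − f(y')‖ if and only if ({x,x'} and {y,y'} are both edges) or (both non-edges) of G (for x ≠ x', y ≠ y'). -/
/-!
Put `t = 1 / (|V| + 1)` and `M = I + t A`, with `A` the adjacency matrix of `G`. By Gershgorin's
theorem `M` is positive semidefinite, so it is the Gram matrix of vectors `g v`; then
`‖g u - g v‖² = 2 - 2t` on edges and `2` on non-edges. These `|V|` points span an affine subspace
of dimension at most `|V| - 1`, which embeds isometrically in `ℝ^(|V| - 1)`.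
-/

open Finset Matrix
open scoped ComplexOrder

namespace Matrix

theorem posSemidef_of_sum_row_le_diag {n : Type*} [Fintype n] [DecidableEq n]
    {A : Matrix n n ℝ} (hA : A.IsHermitian) (h : ∀ k, ∑ j ∈ univ.erase k, ‖A k j‖ ≤ A k k) :
    A.PosSemidef := by
  refine posSemidef_iff_isHermitian_and_spectrum_nonneg.2 ⟨hA, fun μ hμ => ?_⟩
  rw [← spectrum_toLin', ← Module.End.hasEigenvalue_iff_mem_spectrum] at hμ
  obtain ⟨k, hk⟩ := eigenvalue_mem_ball hμ
  rw [Metric.mem_closedBall, Real.dist_eq] at hk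
  rw [Set.mem_ofPred_eq]
  linarith [neg_abs_le (μ - A k k), h k]

theorem PosSemidef.exists_gram_eq {𝕜 n : Type*} [RCLike 𝕜] [Fintype n] [DecidableEq n]
    {A : Matrix n n 𝕜} (hA : A.PosSemidef) : ∃ v : n → EuclideanSpace 𝕜 n, gram 𝕜 v = A := by
  open scoped MatrixOrder in
  obtain ⟨B, hB⟩ : ∃ B : Matrix n n 𝕜, A = Bᴴ * B :=
    ⟨CFC.sqrt A, by rw [← star_eq_conjTranspose, (CFC.sqrt_nonneg A).isSelfAdjoint.star_eq,
      CFC.sqrt_mul_sqrt_self A hA.nonneg]⟩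
  refine ⟨fun j => WithLp.toLp 2 (Bᵀ j), ?_⟩
  ext i j
  simp [hB, gram_apply, mul_apply, PiLp.inner_apply, mul_comm]

end Matrix

theorem dist_eq_sqrt_gram {ι E : Type*} [NormedAddCommGroup E] [InnerProductSpace ℝ E]
    (v : ι → E) (i j : ι) :
    dist (v i) (v j) = √(gram ℝ v i i - 2 * gram ℝ v i j + gram ℝ v j j) := by
  simp only [gram_apply, real_inner_self_eq_norm_sq, ← norm_sub_sq_real, dist_eq_norm,
    Real.sqrt_sq (norm_nonneg _)]

theorem nonempty_linearIsometry_of_finrank_le {𝕜 E F : Type*} [RCLike 𝕜]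
    [NormedAddCommGroup E] [InnerProductSpace 𝕜 E] [FiniteDimensional 𝕜 E]
    [NormedAddCommGroup F] [InnerProductSpace 𝕜 F] [FiniteDimensional 𝕜 F]
    (h : Module.finrank 𝕜 E ≤ Module.finrank 𝕜 F) : Nonempty (E →ₗᵢ[𝕜] F) := by
  let bE := stdOrthonormalBasis 𝕜 E
  let bF := stdOrthonormalBasis 𝕜 F
  let f : E →ₗ[𝕜] F := bE.toBasis.constr 𝕜 (bF ∘ Fin.castLE h)
  refine ⟨f.isometryOfOrthonormal (v := bE.toBasis) (by simp [bE.orthonormal]) ?_⟩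
  have hf : f ∘ bE.toBasis = bF ∘ Fin.castLE h := funext (bE.toBasis.constr_basis 𝕜 _)
  rw [hf]
  exact bF.orthonormal.comp _ (Fin.castLE_injective h)

theorem exists_euclideanSpace_fin_card_sub_one_dist_eq {ι E P : Type*} [Fintype ι]
    [NormedAddCommGroup E] [InnerProductSpace ℝ E] [MetricSpace P] [NormedAddTorsor E P]
    (p : ι → P) :
    ∃ q : ι → EuclideanSpace ℝ (Fin (Fintype.card ι - 1)),
      ∀ i j, dist (q i) (q j) = dist (p i) (p j) := by
  rcases isEmpty_or_nonempty ι with hι | ⟨⟨i₀⟩⟩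
  · exact ⟨isEmptyElim, isEmptyElim⟩
  have hrank : Module.finrank ℝ (vectorSpan ℝ (Set.range p)) ≤
      Module.finrank ℝ (EuclideanSpace ℝ (Fin (Fintype.card ι - 1))) := by
    rw [finrank_euclideanSpace_fin]
    exact finrank_vectorSpan_range_le ℝ p (Nat.sub_add_cancel (Fintype.card_pos_iff.2 ⟨i₀⟩)).symm
  obtain ⟨L⟩ := nonempty_linearIsometry_of_finrank_le hrank
  refine ⟨fun i => L ⟨p i -ᵥ p i₀, vsub_mem_vectorSpan ℝ (Set.mem_range_self i)
    (Set.mem_range_self i₀)⟩, fun i j => ?_⟩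
  rw [L.dist_map, Subtype.dist_eq, dist_eq_norm, dist_eq_norm_vsub E, vsub_sub_vsub_cancel_right]

theorem SimpleGraph.posSemidef_one_add_smul_adjMatrix {V : Type*} [Fintype V] [DecidableEq V]
    (G : SimpleGraph V) [DecidableRel G.Adj] {t : ℝ} (ht₀ : 0 ≤ t)
    (ht : t * Fintype.card V ≤ 1) : (1 + t • G.adjMatrix ℝ).PosSemidef := by
  refine posSemidef_of_sum_row_le_diag
    (isHermitian_one.add ((G.isHermitian_adjMatrix ℝ).smul (IsSelfAdjoint.all t))) fun k => ?_
  calc ∑ j ∈ univ.erase k, ‖(1 + t • G.adjMatrix ℝ) k j‖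
      ≤ ∑ j ∈ univ.erase k, t := sum_le_sum fun j hj => by
        rw [Matrix.add_apply, one_apply_ne (ne_of_mem_erase hj).symm, Matrix.smul_apply,
          adjMatrix_apply]
        split_ifs <;> simp [abs_of_nonneg ht₀, ht₀]
    _ ≤ t * Fintype.card V := by
        rw [sum_const, nsmul_eq_mul, mul_comm]
        gcongr
        exact_mod_cast card_le_univ _
    _ ≤ 1 := ht
    _ = (1 + t • G.adjMatrix ℝ) k k := by simp

theorem exists_dist_eq_ite_adj {V : Type*} [Fintype V] [DecidableEq V] (G : SimpleGraph V)
    [DecidableRel G.Adj] : ∃ (g : V → EuclideanSpace ℝ V) (a b : ℝ), a ≠ b ∧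
      ∀ u v, u ≠ v → dist (g u) (g v) = if G.Adj u v then a else b := by
  set t : ℝ := 1 / (Fintype.card V + 1)
  have ht₀ : 0 < t := by positivity
  have ht₁ : t ≤ 1 := by
    rw [div_le_one (by positivity)]
    linarith [(Fintype.card V).cast_nonneg (α := ℝ)]
  have ht : t * Fintype.card V ≤ 1 := by
    rw [div_mul_eq_mul_div, one_mul, div_le_one (by positivity)]
    linarith
  obtain ⟨g, hg⟩ := (G.posSemidef_one_add_smul_adjMatrix ht₀.le ht).exists_gram_eq
  refine ⟨g, √(2 - 2 * t), √2, (Real.sqrt_lt_sqrt (by linarith) (by linarith)).ne,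
    fun u v huv => ?_⟩
  rw [dist_eq_sqrt_gram, hg]
  simp only [Matrix.add_apply, one_apply_eq, one_apply_ne huv, Matrix.smul_apply,
    SimpleGraph.adjMatrix_apply, G.irrefl, if_false, smul_eq_mul]
  split_ifs <;> ring_nf

theorem stmt_10 {V : Type*} [Fintype V] (G : SimpleGraph V) :
    ∃ f : V → EuclideanSpace ℝ (Fin (Fintype.card V - 1)),
      ∀ x x' y y' : V, x ≠ x' → y ≠ y' →
        (dist (f x) (f x') = dist (f y) (f y') ↔ (G.Adj x x' ↔ G.Adj y y')) := by
  classical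
  obtain ⟨g, a, b, hab, hg⟩ := exists_dist_eq_ite_adj G
  obtain ⟨f, hf⟩ := exists_euclideanSpace_fin_card_sub_one_dist_eq g
  refine ⟨f, fun x x' y y' hx hy => ?_⟩
  rw [hf, hf, hg x x' hx, hg y y' hy]
  split_ifs <;> simp_all [hab.symm]
end

section
/- Let (G, d) be a finite metric space on n points enumerated v₁,…,v_n, and let M be the matrix with entries d(v_i, v_j)². If Q_M < 0 (Schoenberg quadratic form maximum over unit vectors with zero coordinate sum), then (G,d) embeds isometrically in ℝ^{n−1} and the image affinely spans ℝ^{n−1}; in particular it does not embed isometrically in ℝ^{n−2}. -/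
open Matrix

namespace Matrix

variable {ι : Type*} [Fintype ι]

def IsCondNegDef (D : Matrix ι ι ℝ) : Prop :=
  ∀ x : ι → ℝ, ∑ i, x i = 0 → x ≠ 0 → x ⬝ᵥ D *ᵥ x < 0

lemma IsSymm.dotProduct_mulVec_comm {R : Type*} [CommSemiring R]
    {D : Matrix ι ι R} (hD : D.IsSymm) (x y : ι → R) : x ⬝ᵥ D *ᵥ y = y ⬝ᵥ D *ᵥ x := by
  rw [dotProduct_mulVec, ← vecMul_transpose, hD.eq, dotProduct_comm]

lemma dotProduct_mulVec_single_sub_single {R : Type*} [CommRing R] [DecidableEq ι]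
    {D : Matrix ι ι R} (hD : D.IsSymm) (hdiag : ∀ i, D i i = 0) (i j : ι) :
    (Pi.single i 1 - Pi.single j 1) ⬝ᵥ D *ᵥ (Pi.single i 1 - Pi.single j 1) = -2 * D i j := by
  simp only [mulVec_sub, mulVec_single, MulOpposite.op_one, one_smul, dotProduct_sub,
    sub_dotProduct, single_dotProduct, col_apply, hdiag, hD.apply j i]
  ring

end Matrix

namespace Schoenberg

variable {ι : Type*} [Fintype ι]

lemma dotProduct_mulVec_norm_sub_sq {E : Type*} [NormedAddCommGroup E] [InnerProductSpace ℝ E]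
    (y : ι → E) {w : ι → ℝ} (hw : ∑ i, w i = 0) :
    w ⬝ᵥ (of fun i j => ‖y i - y j‖ ^ 2) *ᵥ w = -2 * ‖∑ i, w i • y i‖ ^ 2 := by
  have hleft : ∑ i, ∑ j, ‖y i‖ ^ 2 * w i * w j = 0 := by
    simp [← Finset.mul_sum, hw]
  have hright : ∑ i, ∑ j, ‖y j‖ ^ 2 * w i * w j = 0 := by
    rw [Finset.sum_comm]
    simp [← Finset.sum_mul, ← Finset.mul_sum, hw]
  have hinner : ∑ i, ∑ j, inner ℝ (y i) (y j) * w i * w j = ‖∑ i, w i • y i‖ ^ 2 := by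
    rw [← real_inner_self_eq_norm_sq, sum_inner]
    simp only [inner_sum, inner_smul_left, inner_smul_right]
    simp [mul_comm, mul_left_comm]
  calc w ⬝ᵥ (of fun i j => ‖y i - y j‖ ^ 2) *ᵥ w
      = ∑ i, ∑ j, ‖y i‖ ^ 2 * w i * w j + ∑ i, ∑ j, ‖y j‖ ^ 2 * w i * w j
          - 2 * ∑ i, ∑ j, inner ℝ (y i) (y j) * w i * w j := by
        simp only [dotProduct, mulVec, of_apply, Finset.mul_sum, ← Finset.sum_add_distrib,
          ← Finset.sum_sub_distrib]
        refine Finset.sum_congr rfl fun i _ => Finset.sum_congr rfl fun j _ => ?_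
        rw [norm_sub_sq_real]
        ring
    _ = -2 * ‖∑ i, w i • y i‖ ^ 2 := by
        rw [hleft, hright, hinner]
        ring

theorem affineIndependent_of_isCondNegDef {E : Type*} [NormedAddCommGroup E]
    [InnerProductSpace ℝ E] {y : ι → E} {D : Matrix ι ι ℝ}
    (hy : ∀ i j, ‖y i - y j‖ ^ 2 = D i j) (hD : D.IsCondNegDef) : AffineIndependent ℝ y := by
  obtain rfl : D = of fun i j => ‖y i - y j‖ ^ 2 := by ext i j; exact (hy i j).symm
  rw [affineIndependent_iff_of_fintype]
  intro w hw hcomb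
  rw [Finset.weightedVSub_eq_linear_combination _ hw] at hcomb
  by_contra! hne
  have hneg := hD w hw (Function.ne_iff.2 hne)
  rw [dotProduct_mulVec_norm_sub_sq y hw, hcomb] at hneg
  simp at hneg

lemma nonempty_and_bddAbove_of_sSup_neg {s : Set ℝ} (h : sSup s < 0) :
    s.Nonempty ∧ BddAbove s := by
  refine ⟨Set.nonempty_iff_ne_empty.2 fun he => ?_, not_not.1 fun hb => ?_⟩
  · simp [he] at h
  · rw [Real.sSup_of_not_bddAbove hb] at h
    exact lt_irrefl _ h

lemma sum_sum_ite_lt_eq_half_dotProduct [LinearOrder ι] {D : Matrix ι ι ℝ} (hD : D.IsSymm)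
    (hdiag : ∀ i, D i i = 0) (x : ι → ℝ) :
    ∑ i, ∑ j, (if i < j then D i j * x i * x j else 0) = 2⁻¹ * (x ⬝ᵥ D *ᵥ x) := by
  have hswap : ∑ i, ∑ j, (if j < i then D i j * x i * x j else 0) =
      ∑ i, ∑ j, (if i < j then D i j * x i * x j else 0) := by
    rw [Finset.sum_comm]
    refine Finset.sum_congr rfl fun i _ => Finset.sum_congr rfl fun j _ => ?_
    rw [hD.apply]
    ring_nf
  have hsplit : x ⬝ᵥ D *ᵥ x = ∑ i, ∑ j, ((if i < j then D i j * x i * x j else 0) +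
      (if j < i then D i j * x i * x j else 0)) := by
    simp only [dotProduct, mulVec, Finset.mul_sum]
    refine Finset.sum_congr rfl fun i _ => Finset.sum_congr rfl fun j _ => ?_
    rcases lt_trichotomy i j with h | rfl | h
    · rw [if_pos h, if_neg h.not_gt]; ring
    · simp [hdiag]
    · rw [if_neg h.not_gt, if_pos h]; ring
  simp only [hsplit, Finset.sum_add_distrib, hswap]
  ring

theorem isCondNegDef_of_Q_neg {n : ℕ} {D : Matrix (Fin n) (Fin n) ℝ} (hD : D.IsSymm)
    (hdiag : ∀ i, D i i = 0) (hQ : Q n D < 0) : D.IsCondNegDef := by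
  have hbdd := (nonempty_and_bddAbove_of_sSup_neg hQ).2
  intro x hsum hx
  have hpos : 0 < ∑ k, x k ^ 2 := by
    obtain ⟨k, hk⟩ := Function.ne_iff.1 hx
    exact Finset.sum_pos' (fun j _ => sq_nonneg _) ⟨k, Finset.mem_univ k, sq_pos_of_ne_zero hk⟩
  set c := √(∑ k, x k ^ 2)
  have hc : 0 < c := Real.sqrt_pos.2 hpos
  have hle : 2⁻¹ * ((c⁻¹ • x) ⬝ᵥ D *ᵥ (c⁻¹ • x)) ≤ Q n D := by
    refine le_csSup hbdd ⟨c⁻¹ • x, ?_, ?_, (sum_sum_ite_lt_eq_half_dotProduct hD hdiag _).symm⟩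
    · simp [mul_pow, ← Finset.mul_sum, c, Real.sq_sqrt hpos.le, hpos.ne']
    · simp [← Finset.mul_sum, hsum]
  have hscale : (c⁻¹ • x) ⬝ᵥ D *ᵥ (c⁻¹ • x) = c⁻¹ ^ 2 * (x ⬝ᵥ D *ᵥ x) := by
    simp only [mulVec_smul, smul_dotProduct, dotProduct_smul, smul_eq_mul]
    ring
  rw [hscale] at hle
  exact neg_of_mul_neg_right (by linarith) (sq_nonneg c⁻¹)

theorem two_le_of_Q_neg {n : ℕ} {M : Fin n → Fin n → ℝ} (hQ : Q n M < 0) : 2 ≤ n := by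
  obtain ⟨_, x, hx2, hx, -⟩ := (nonempty_and_bddAbove_of_sSup_neg hQ).1
  by_contra! h
  interval_cases n
  · simp at hx2
  · simp_all

variable (ι) in
def sumLinearMap : Module.Dual ℝ (ι → ℝ) where
  toFun x := ∑ i, x i
  map_add' _ _ := Finset.sum_add_distrib
  map_smul' _ _ := (Finset.mul_sum ..).symm

variable (ι) in
/-- The hyperplane `∑ i, x i = 0` as a type of its own, so that it can carry Schoenberg's inner
product instead of the norm it inherits from `ι → ℝ`. -/
def SumZero : Type _ := LinearMap.ker (sumLinearMap ι)

namespace SumZero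

instance : AddCommGroup (SumZero ι) := inferInstanceAs (AddCommGroup (LinearMap.ker _))
instance : Module ℝ (SumZero ι) := inferInstanceAs (Module ℝ (LinearMap.ker _))
instance : FiniteDimensional ℝ (SumZero ι) :=
  inferInstanceAs (FiniteDimensional ℝ (LinearMap.ker (sumLinearMap ι)))

def val : SumZero ι →ₗ[ℝ] ι → ℝ := (LinearMap.ker (sumLinearMap ι)).subtype

lemma val_injective : Function.Injective (val (ι := ι)) := Subtype.val_injective

lemma sum_val (x : SumZero ι) : ∑ i, val x i = 0 :=
  (show LinearMap.ker (sumLinearMap ι) from x).2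

def single [DecidableEq ι] (i₀ i : ι) : SumZero ι :=
  show LinearMap.ker (sumLinearMap ι) from
    ⟨Pi.single i 1 - Pi.single i₀ 1, by simp [sumLinearMap]⟩

lemma val_single [DecidableEq ι] (i₀ i : ι) : val (single i₀ i) = Pi.single i 1 - Pi.single i₀ 1 :=
  rfl

lemma finrank_add_one [Nonempty ι] : Module.finrank ℝ (SumZero ι) + 1 = Fintype.card ι := by
  classical
  have hne : sumLinearMap ι ≠ 0 := fun h => by
    simpa [sumLinearMap] using LinearMap.congr_fun h (Pi.single (Classical.arbitrary ι) 1)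
  rw [← Module.finrank_fintype_fun_eq_card ℝ]
  exact (sumLinearMap ι).finrank_ker_add_one_of_ne_zero hne

@[reducible] noncomputable def innerCore {D : Matrix ι ι ℝ} (hD : D.IsSymm)
    (hneg : D.IsCondNegDef) :
    InnerProductSpace.Core ℝ (SumZero ι) where
  inner x y := -2⁻¹ * (val x ⬝ᵥ D *ᵥ val y)
  conj_inner_symm x y := by simp [hD.dotProduct_mulVec_comm (val x)]
  re_inner_nonneg x := by
    rcases eq_or_ne x 0 with rfl | hx
    · simp
    · have := hneg (val x) (sum_val x) ((map_ne_zero_iff _ val_injective).2 hx)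
      simp only [RCLike.re_to_real]
      linarith
  add_left x y z := by simp only [map_add, add_dotProduct]; ring
  smul_left x y r := by
    simp only [map_smul, smul_dotProduct, smul_eq_mul, conj_trivial]
    ring
  definite x hx := by
    by_contra h
    have := hneg (val x) (sum_val x) ((map_ne_zero_iff _ val_injective).2 h)
    linarith

end SumZero

theorem exists_euclidean_of_isCondNegDef {d : ℕ} (hcard : Fintype.card ι = d + 1)
    {D : Matrix ι ι ℝ} (hD : D.IsSymm) (hdiag : ∀ i, D i i = 0) (hneg : D.IsCondNegDef) :
    ∃ p : ι → EuclideanSpace ℝ (Fin d), ∀ i j, ‖p i - p j‖ ^ 2 = D i j := by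
  classical
  have : Nonempty ι := Fintype.card_pos_iff.1 (by omega)
  let core := SumZero.innerCore hD hneg
  let : NormedAddCommGroup (SumZero ι) := core.toNormedAddCommGroup
  let : InnerProductSpace ℝ (SumZero ι) := .ofCore core.toCore
  have hdim : Module.finrank ℝ (SumZero ι) = d := by
    have := SumZero.finrank_add_one (ι := ι)
    omega
  let e := ((stdOrthonormalBasis ℝ (SumZero ι)).reindex (finCongr hdim)).repr
  let i₀ := Classical.arbitrary ι
  refine ⟨fun i => e (SumZero.single i₀ i), fun i j => ?_⟩
  rw [← map_sub, LinearIsometryEquiv.norm_map, ← real_inner_self_eq_norm_sq]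
  change -2⁻¹ * (SumZero.val (SumZero.single i₀ i - SumZero.single i₀ j) ⬝ᵥ
    D *ᵥ SumZero.val (SumZero.single i₀ i - SumZero.single i₀ j)) = D i j
  rw [map_sub, SumZero.val_single, SumZero.val_single, sub_sub_sub_cancel_right,
    dotProduct_mulVec_single_sub_single hD hdiag]
  ring

end Schoenberg

open Schoenberg

theorem stmt_15 (n : ℕ) (G : Type*) [MetricSpace G] (v : Fin n ≃ G)
    (hQ : Q n (fun i j => dist (v i) (v j) ^ 2) < 0) :
    (∃ f : G → EuclideanSpace ℝ (Fin (n - 1)),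
        (∀ x y : G, dist (f x) (f y) = dist x y) ∧
        affineSpan ℝ (Set.range f) = ⊤) ∧
    ¬∃ g : G → EuclideanSpace ℝ (Fin (n - 2)),
        ∀ x y : G, dist (g x) (g y) = dist x y := by
  let D : Matrix (Fin n) (Fin n) ℝ := fun i j => dist (v i) (v j) ^ 2
  have hD : D.IsSymm := Matrix.IsSymm.ext fun i j => by simp [D, dist_comm]
  have hdiag : ∀ i, D i i = 0 := fun i => by simp [D]
  have hneg : D.IsCondNegDef := isCondNegDef_of_Q_neg hD hdiag hQ
  have hn : 2 ≤ n := two_le_of_Q_neg hQ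
  constructor
  · obtain ⟨p, hp⟩ := exists_euclidean_of_isCondNegDef (d := n - 1)
      (by rw [Fintype.card_fin]; omega) hD hdiag hneg
    refine ⟨p ∘ v.symm, fun x y => ?_, ?_⟩
    · rw [← pow_left_inj₀ dist_nonneg dist_nonneg two_ne_zero, dist_eq_norm]
      simpa [D] using hp (v.symm x) (v.symm y)
    · have hind := affineIndependent_of_isCondNegDef hp hneg
      rw [EquivLike.range_comp, hind.affineSpan_eq_top_iff_card_eq_finrank_add_one,
        Fintype.card_fin, finrank_euclideanSpace_fin]
      omega
  · rintro ⟨g, hg⟩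
    have hind := affineIndependent_of_isCondNegDef (y := g ∘ v) (D := D)
      (fun i j => by simp [D, ← dist_eq_norm, hg]) hneg
    have hcard := hind.card_le_finrank_succ.trans (Nat.succ_le_succ (Submodule.finrank_le _))
    rw [Fintype.card_fin, finrank_euclideanSpace_fin] at hcard
    omega
end

section
/- Suppose a finite simple graph G on n vertices is representable in ℝ^m (an injective map f : V(G) → ℝ^m realizing exactly two distances, one for edges and one for non-edges, assuming G is neither complete nor edgeless). Then n ≤ (m+1)(m+2)/2. -/
/-!
Blokhuis' argument. If the points `p i` realise only the distances `a, b ≠ 0`, the quartics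
`F i x = (‖x - p i‖² - a²) (‖x - p i‖² - b²)` satisfy `F i (p j) = 0` for `j ≠ i` and
`F i (p i) = a² b² ≠ 0`. Together with `1` and the coordinate functions they are linearly
independent: in a vanishing combination `∑ αᵢ Fᵢ + β₀ + ⟪β, x⟫` the top-degree terms force
`∑ αᵢ = 0` and `∑ αᵢ pᵢ = 0`, and then evaluating at the points gives `∑ αᵢ² = 0`. All these
functions lie in the span of `‖x‖⁴, ‖x‖² xₖ, xⱼ xₖ, xₖ, 1`, so `n + m + 1 ≤ 2 + 2m + m(m+1)/2`.
-/

open Finset RealInnerProductSpace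

section Metric

variable {X : Type*} [PseudoMetricSpace X]

noncomputable def twoDistancePoly (a b : ℝ) (p x : X) : ℝ :=
  (dist x p ^ 2 - a ^ 2) * (dist x p ^ 2 - b ^ 2)

lemma twoDistancePoly_self (a b : ℝ) (p : X) : twoDistancePoly a b p p = a ^ 2 * b ^ 2 := by
  simp [twoDistancePoly]

lemma twoDistancePoly_eq_zero {a b : ℝ} {p x : X} (h : dist x p = a ∨ dist x p = b) :
    twoDistancePoly a b p x = 0 := by
  rcases h with h | h <;> simp [twoDistancePoly, h]

end Metric

section InnerProductSpace

variable {E : Type*} [NormedAddCommGroup E] [InnerProductSpace ℝ E] {V : Type*} [Fintype V]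

lemma twoDistancePoly_smul (a b t : ℝ) (p y : E) :
    twoDistancePoly a b p (t • y) =
      ‖y‖ ^ 4 * t ^ 4 - 4 * ‖y‖ ^ 2 * ⟪y, p⟫ * t ^ 3
        + (4 * ⟪y, p⟫ ^ 2 + (2 * ‖p‖ ^ 2 - a ^ 2 - b ^ 2) * ‖y‖ ^ 2) * t ^ 2
        - 2 * (2 * ‖p‖ ^ 2 - a ^ 2 - b ^ 2) * ⟪y, p⟫ * t
        + (‖p‖ ^ 2 - a ^ 2) * (‖p‖ ^ 2 - b ^ 2) := by
  rw [twoDistancePoly, dist_eq_norm, norm_sub_sq_real, norm_smul, real_inner_smul_left, mul_pow,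
    Real.norm_eq_abs, sq_abs]
  ring

lemma leading_coeffs_eq_zero_of_sum_twoDistancePoly_add_affine_eq_zero {a b : ℝ} {p : V → E}
    {α : V → ℝ} {β₀ : ℝ} {β : E}
    (h : ∀ x, ∑ i, α i * twoDistancePoly a b (p i) x + β₀ + ⟪β, x⟫ = 0) (y : E) :
    (∑ i, α i) * ‖y‖ ^ 4 = 0 ∧ ‖y‖ ^ 2 * ⟪y, ∑ i, α i • p i⟫ = 0 := by
  have hpoly := fun t : ℝ => h (t • y)
  simp only [twoDistancePoly_smul, inner_smul_right, mul_add, mul_sub, sum_add_distrib,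
    sum_sub_distrib, ← mul_assoc, ← sum_mul] at hpoly
  have hcubic : ∑ i, α i * 4 * ‖y‖ ^ 2 * ⟪y, p i⟫ = 4 * (‖y‖ ^ 2 * ⟪y, ∑ i, α i • p i⟫) := by
    simp only [inner_sum, inner_smul_right, mul_sum]
    exact sum_congr rfl fun _ _ => by ring
  -- The fourth and third finite differences at `t = -2, …, 2` isolate the coefficients of
  -- `t⁴` and `t³` in the quartic `hpoly`.
  constructor
  · linear_combination (hpoly 2 - 4 * hpoly 1 + 6 * hpoly 0 - 4 * hpoly (-1) + hpoly (-2)) / 24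
  · linear_combination
      (hpoly 2 - 2 * hpoly 1 + 2 * hpoly (-1) - hpoly (-2) + 12 * hcubic) / (-48)

theorem eq_zero_of_sum_twoDistancePoly_add_affine_eq_zero [Nontrivial E] {a b : ℝ} (ha : a ≠ 0)
    (hb : b ≠ 0) {p : V → E} (hp : Pairwise fun i j => dist (p i) (p j) = a ∨ dist (p i) (p j) = b)
    {α : V → ℝ} {β₀ : ℝ} {β : E}
    (h : ∀ x, ∑ i, α i * twoDistancePoly a b (p i) x + β₀ + ⟪β, x⟫ = 0) :
    α = 0 ∧ β₀ = 0 ∧ β = 0 := by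
  have hleading := leading_coeffs_eq_zero_of_sum_twoDistancePoly_add_affine_eq_zero h
  obtain ⟨y, hy⟩ := exists_ne (0 : E)
  have hα_sum : ∑ i, α i = 0 := by simpa [hy] using (hleading y).1
  have hα_centroid : ∑ i, α i • p i = 0 := by
    simpa [real_inner_self_eq_norm_sq] using (hleading (∑ i, α i • p i)).2
  have hval : ∀ j, α j * (a ^ 2 * b ^ 2) + β₀ + ⟪β, p j⟫ = 0 := by
    intro j
    rw [← h (p j), sum_eq_single j (fun i _ hij => ?_) (by simp), twoDistancePoly_self]
    rw [twoDistancePoly_eq_zero (hp hij.symm), mul_zero]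
  have hα_sq : (∑ j, α j ^ 2) * (a ^ 2 * b ^ 2) = 0 := by
    calc (∑ j, α j ^ 2) * (a ^ 2 * b ^ 2)
        = ∑ j, α j * (α j * (a ^ 2 * b ^ 2) + β₀ + ⟪β, p j⟫) - β₀ * ∑ j, α j
          - ⟪β, ∑ j, α j • p j⟫ := by
          simp only [inner_sum, inner_smul_right, sum_mul, mul_sum, ← sum_sub_distrib]
          exact sum_congr rfl fun j _ => by ring
      _ = 0 := by simp [hval, hα_sum, hα_centroid]
  have hα : α = 0 := by
    have := (mul_eq_zero.1 hα_sq).resolve_right (by positivity)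
    ext j
    simpa using (sum_eq_zero_iff_of_nonneg (fun j _ => sq_nonneg (α j))).1 this j (mem_univ j)
  have hβ₀ : β₀ = 0 := by simpa [hα] using h 0
  exact ⟨hα, hβ₀, by simpa [hα, hβ₀] using h β⟩

end InnerProductSpace

lemma Submodule.sum_mul_apply_mem {R X κ : Type*} [CommSemiring R] [Fintype κ]
    {S : Submodule R (X → R)} (c : κ → R) {f : κ → X → R} (hf : ∀ k, f k ∈ S) :
    (fun x => ∑ k, c k * f k x) ∈ S := by
  convert S.sum_mem (t := univ) fun k _ => S.smul_mem (c k) (hf k) using 1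
  ext x
  simp

section EuclideanSpace

variable (ι : Type*) [Fintype ι]

noncomputable def twoDistanceSpanningFamily :
    Unit ⊕ Unit ⊕ ι ⊕ ι ⊕ Sym2 ι → (EuclideanSpace ℝ ι → ℝ) :=
  Sum.elim (fun _ x => ‖x‖ ^ 4) <| Sum.elim (fun _ _ => 1) <| Sum.elim (fun k x => x k) <|
    Sum.elim (fun k x => ‖x‖ ^ 2 * x k) <|
      Sym2.lift ⟨fun j k x => x j * x k, fun _ _ => funext fun _ => mul_comm _ _⟩

variable {ι} {V : Type*}

noncomputable def twoDistancePolyAffine (a b : ℝ) (p : V → EuclideanSpace ℝ ι) :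
    V ⊕ Unit ⊕ ι → (EuclideanSpace ℝ ι → ℝ) :=
  Sum.elim (fun i => twoDistancePoly a b (p i)) <| Sum.elim (fun _ _ => 1) fun k x => x k

lemma twoDistancePoly_mem_span_twoDistanceSpanningFamily (a b : ℝ) (p : EuclideanSpace ℝ ι) :
    twoDistancePoly a b p ∈ Submodule.span ℝ (Set.range (twoDistanceSpanningFamily ι)) := by
  set S := Submodule.span ℝ (Set.range (twoDistanceSpanningFamily ι))
  have hS : ∀ i, twoDistanceSpanningFamily ι i ∈ S := fun i => Submodule.subset_span ⟨i, rfl⟩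
  have hinner_eq : ∀ x : EuclideanSpace ℝ ι, ⟪x, p⟫ = ∑ k, p k * x k := fun x => by
    simp [PiLp.inner_apply]
  have hcoord : ∀ k, (fun x : EuclideanSpace ℝ ι => x k) ∈ S :=
    fun k => hS (.inr (.inr (.inl k)))
  have hcubic : ∀ k, (fun x : EuclideanSpace ℝ ι => ‖x‖ ^ 2 * x k) ∈ S :=
    fun k => hS (.inr (.inr (.inr (.inl k))))
  have hquad : ∀ j k, (fun x : EuclideanSpace ℝ ι => x j * x k) ∈ S :=
    fun j k => hS (.inr (.inr (.inr (.inr s(j, k)))))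
  have hinner : (fun x => ⟪x, p⟫) ∈ S := by
    simpa only [hinner_eq] using Submodule.sum_mul_apply_mem p hcoord
  have hnorm_sq : (fun x : EuclideanSpace ℝ ι => ‖x‖ ^ 2) ∈ S := by
    convert Submodule.sum_mul_apply_mem 1 fun k => hquad k k using 2 with x
    rw [EuclideanSpace.real_norm_sq_eq]
    simp only [Pi.one_apply, one_mul, sq]
  have hnorm_sq_inner : (fun x => ‖x‖ ^ 2 * ⟪x, p⟫) ∈ S := by
    convert Submodule.sum_mul_apply_mem p hcubic using 2 with x
    simp only [hinner_eq, mul_sum, mul_left_comm]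
  have hinner_sq : (fun x => ⟪x, p⟫ ^ 2) ∈ S := by
    have hcoord_inner : ∀ j, (fun x => x j * ⟪x, p⟫) ∈ S := fun j => by
      convert Submodule.sum_mul_apply_mem p (hquad j) using 2 with x
      simp only [hinner_eq, mul_sum, mul_left_comm]
    convert Submodule.sum_mul_apply_mem p hcoord_inner using 2 with x
    rw [sq]
    nth_rw 1 [hinner_eq]
    simp only [sum_mul, mul_assoc]
  have hexpand : twoDistancePoly a b p = fun x =>
      ‖x‖ ^ 4 + (-4) * (‖x‖ ^ 2 * ⟪x, p⟫) + 4 * ⟪x, p⟫ ^ 2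
        + (2 * ‖p‖ ^ 2 - a ^ 2 - b ^ 2) * ‖x‖ ^ 2 + (-2 * (2 * ‖p‖ ^ 2 - a ^ 2 - b ^ 2)) * ⟪x, p⟫
        + (‖p‖ ^ 2 - a ^ 2) * (‖p‖ ^ 2 - b ^ 2) * 1 := by
    funext x
    rw [twoDistancePoly, dist_eq_norm, norm_sub_sq_real]
    ring
  rw [hexpand]
  exact add_mem (add_mem (add_mem (add_mem (add_mem (hS (.inl ())) (S.smul_mem _ hnorm_sq_inner))
    (S.smul_mem _ hinner_sq)) (S.smul_mem _ hnorm_sq)) (S.smul_mem _ hinner))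
    (S.smul_mem _ (hS (.inr (.inl ()))))

lemma span_twoDistancePolyAffine_le (a b : ℝ) (p : V → EuclideanSpace ℝ ι) :
    Submodule.span ℝ (Set.range (twoDistancePolyAffine a b p))
      ≤ Submodule.span ℝ (Set.range (twoDistanceSpanningFamily ι)) := by
  refine Submodule.span_le.2 (Set.range_subset_iff.2 ?_)
  rintro (i | _ | k)
  · exact twoDistancePoly_mem_span_twoDistanceSpanningFamily a b (p i)
  · exact Submodule.subset_span ⟨.inr (.inl ()), rfl⟩
  · exact Submodule.subset_span ⟨.inr (.inr (.inl k)), rfl⟩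

theorem linearIndependent_twoDistancePolyAffine [Fintype V] [Nonempty ι] {a b : ℝ} (ha : a ≠ 0)
    (hb : b ≠ 0) {p : V → EuclideanSpace ℝ ι}
    (hp : Pairwise fun i j => dist (p i) (p j) = a ∨ dist (p i) (p j) = b) :
    LinearIndependent ℝ (twoDistancePolyAffine a b p) := by
  rw [Fintype.linearIndependent_iff]
  intro g hg
  obtain ⟨hα, hβ₀, hβ⟩ := eq_zero_of_sum_twoDistancePoly_add_affine_eq_zero ha hb hp
    (α := fun i => g (.inl i)) (β₀ := g (.inr (.inl ())))
    (β := WithLp.toLp 2 fun k => g (.inr (.inr k))) fun x => by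
      simpa [Fintype.sum_sum_type, twoDistancePolyAffine, PiLp.inner_apply, mul_comm, add_assoc]
        using congrFun hg x
  rintro (i | _ | k)
  · exact congrFun hα i
  · exact hβ₀
  · exact congrArg (· k) hβ

theorem card_le_choose_of_pairwise_dist [Fintype V] {a b : ℝ} (ha : a ≠ 0) (hb : b ≠ 0)
    {p : V → EuclideanSpace ℝ ι}
    (hp : Pairwise fun i j => dist (p i) (p j) = a ∨ dist (p i) (p j) = b) :
    Fintype.card V ≤ (Fintype.card ι + 2).choose 2 := by
  rcases isEmpty_or_nonempty ι with hι | hι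
  · have : Subsingleton V := ⟨fun i j => by
      by_contra hij
      have : dist (p i) (p j) = a ∨ dist (p i) (p j) = b := hp hij
      rw [Subsingleton.elim (p i) (p j), dist_self] at this
      exact this.elim (fun h => ha h.symm) fun h => hb h.symm⟩
    simpa using Fintype.card_le_one_iff_subsingleton.2 this
  have : Module.Finite ℝ (Submodule.span ℝ (Set.range (twoDistanceSpanningFamily ι))) :=
    .span_of_finite ℝ (Set.finite_range _)
  have hcard := (finrank_span_eq_card (linearIndependent_twoDistancePolyAffine ha hb hp)).ge.trans
    ((Submodule.finrank_mono (span_twoDistancePolyAffine_le a b p)).trans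
      (finrank_range_le_card _))
  simp only [Fintype.card_sum, Fintype.card_unit, Sym2.card] at hcard
  have hpascal : (Fintype.card ι + 2).choose 2
      = (Fintype.card ι + 1).choose 1 + (Fintype.card ι + 1).choose 2 :=
    Nat.choose_succ_succ' _ _
  rw [hpascal, Nat.choose_one_right]
  omega

end EuclideanSpace

lemma exists_ne_zero_forall_dist_eq {V X : Type*} [MetricSpace X] {f : V → X}
    (hf : Function.Injective f) {P : V → V → Prop}
    (h : ∀ x x' y y', x ≠ x' → y ≠ y' → P x x' → P y y' → dist (f x) (f x') = dist (f y) (f y')) :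
    ∃ c ≠ 0, ∀ x y, x ≠ y → P x y → dist (f x) (f y) = c := by
  by_cases hP : ∃ x y, x ≠ y ∧ P x y
  · obtain ⟨x, y, hxy, hP⟩ := hP
    exact ⟨dist (f x) (f y), dist_ne_zero.2 (hf.ne hxy),
      fun x' y' hxy' hP' => h _ _ _ _ hxy' hxy hP' hP⟩
  · push Not at hP
    exact ⟨1, one_ne_zero, fun x y hxy hP' => (hP x y hxy hP').elim⟩

theorem stmt_17_general {V : Type*} [Fintype V] (G : SimpleGraph V) (m : ℕ)
    (h : ∃ f : V → EuclideanSpace ℝ (Fin m), Function.Injective f ∧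
      ∀ x x' y y' : V, x ≠ x' → y ≠ y' →
        (dist (f x) (f x') = dist (f y) (f y') ↔ (G.Adj x x' ↔ G.Adj y y'))) :
    Fintype.card V ≤ (m + 1) * (m + 2) / 2 := by
  obtain ⟨f, hf, hdist⟩ := h
  obtain ⟨a, ha, hadj⟩ := exists_ne_zero_forall_dist_eq hf (P := G.Adj)
    fun x x' y y' hx hy hxx' hyy' => (hdist x x' y y' hx hy).2 (iff_of_true hxx' hyy')
  obtain ⟨b, hb, hnadj⟩ := exists_ne_zero_forall_dist_eq hf (P := fun x y => ¬G.Adj x y)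
    fun x x' y y' hx hy hxx' hyy' => (hdist x x' y y' hx hy).2 (iff_of_false hxx' hyy')
  have hcard := card_le_choose_of_pairwise_dist ha hb (p := f) fun i j hij =>
    (em (G.Adj i j)).imp (hadj i j hij) (hnadj i j hij)
  simpa [Nat.choose_two_right, mul_comm] using hcard

theorem stmt_17 {V : Type*} [Fintype V] (G : SimpleGraph V) (m : ℕ)
    (hnc : ¬∀ x y : V, x ≠ y → G.Adj x y)
    (hne : ¬∀ x y : V, ¬G.Adj x y)
    (h : ∃ f : V → EuclideanSpace ℝ (Fin m), Function.Injective f ∧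
      ∀ x x' y y' : V, x ≠ x' → y ≠ y' →
        (dist (f x) (f x') = dist (f y) (f y') ↔ (G.Adj x x' ↔ G.Adj y y'))) :
    Fintype.card V ≤ (m + 1) * (m + 2) / 2 :=
  stmt_17_general G m h
end

section
/- Let (G, λ) be a finite complete edge-colored graph on n points with color classes M₁, …, M_p (adjacency matrices of the monochromatic subgraphs), and for positive reals a₁,…,a_p set M(a₁,…,a_p) = Σ_i a_i M_i. If Q_{M(a₁²,…,a_p²)} ≤ 0 for all choices of positive a₁,…,a_p, then every triangle of (G,λ) is monochromatic. -/
lemma Q_bddAbove (n : ℕ) (M : Fin n → Fin n → ℝ) :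
    BddAbove {q : ℝ | ∃ x : Fin n → ℝ, ∑ k, x k ^ 2 = 1 ∧ ∑ k, x k = 0 ∧
      q = ∑ i, ∑ j, if i < j then M i j * x i * x j else 0} := by
  refine ⟨∑ i, ∑ j, |M i j|, ?_⟩
  rintro q ⟨x, hx1, _, rfl⟩
  have hxk : ∀ k, |x k| ≤ 1 := by
    intro k
    have h1 : x k ^ 2 ≤ 1 :=
      hx1 ▸ Finset.single_le_sum (fun i _ => sq_nonneg (x i)) (Finset.mem_univ k)
    nlinarith [abs_nonneg (x k), sq_abs (x k)]
  refine Finset.sum_le_sum fun i _ => Finset.sum_le_sum fun j _ => ?_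
  split
  · calc M i j * x i * x j ≤ |M i j * x i * x j| := le_abs_self _
      _ = |M i j| * |x i| * |x j| := by rw [abs_mul, abs_mul]
      _ ≤ |M i j| * 1 * 1 :=
          mul_le_mul (mul_le_mul le_rfl (hxk i) (abs_nonneg _) (abs_nonneg _))
            (hxk j) (abs_nonneg _) (by positivity)
      _ = |M i j| := by ring
  · positivity

lemma half_sum (n : ℕ) (M : Fin n → Fin n → ℝ) (hd : ∀ a, M a a = 0)
    (hs : ∀ a b, M a b = M b a) (v : Fin n → ℝ) :
    ∑ a, ∑ b, (if a < b then M a b * v a * v b else 0)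
      = (∑ a, ∑ b, M a b * v a * v b) / 2 := by
  have key : ∑ a, ∑ b, M a b * v a * v b
      = ∑ a, ∑ b, ((if a < b then M a b * v a * v b else 0)
        + (if b < a then M a b * v a * v b else 0)) := by
    refine Finset.sum_congr rfl fun a _ => Finset.sum_congr rfl fun b _ => ?_
    rcases lt_trichotomy a b with hab | hab | hab
    · simp [hab, not_lt_of_gt hab]
    · simp [hab, hd]
    · simp [hab, not_lt_of_gt hab]
  rw [key]
  simp only [Finset.sum_add_distrib]
  have h2 : ∑ a, ∑ b, (if b < a then M a b * v a * v b else 0)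
      = ∑ a, ∑ b, (if a < b then M a b * v a * v b else 0) := by
    rw [Finset.sum_comm]
    refine Finset.sum_congr rfl fun a _ => Finset.sum_congr rfl fun b _ => ?_
    split_ifs
    · rw [hs]; ring
    · rfl
  rw [h2]; ring

lemma helper (n : ℕ) (l : Fin n → Fin n → ℝ)
    (h0 : ∀ x, l x x = 0) (hsymm : ∀ x y, l x y = l y x)
    (h : ∀ w : ℝ → ℝ, (∀ c, 0 < w c) →
      Q n (fun i j => if i = j then 0 else (w (l i j)) ^ 2) ≤ 0)
    (i j k : Fin n) (hij : i ≠ j) (hjk : j ≠ k) (hik : i ≠ k)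
    (h1 : l i j ≠ l j k) (h2 : l i j ≠ l i k) : False := by
  classical
  set w : ℝ → ℝ := fun c => if c = l i j then 3 else 1 with hw
  have hwpos : ∀ c, 0 < w c := by
    intro c; simp only [hw]; split <;> norm_num
  set M : Fin n → Fin n → ℝ := fun a b => if a = b then 0 else (w (l a b)) ^ 2 with hM
  have hMd : ∀ a, M a a = 0 := fun a => by simp [hM]
  have hMs : ∀ a b, M a b = M b a := by
    intro a b; simp only [hM, hsymm a b]
    by_cases hab : a = b <;> simp [hab, eq_comm]
  have hMij : M i j = 9 := by simp [hM, hij, hw]; norm_num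
  have hMjk : M j k = 1 := by
    simp only [hM, hw, if_neg hjk]
    rw [if_neg (fun hc => h1 hc.symm)]; norm_num
  have hMik : M i k = 1 := by
    simp only [hM, hw, if_neg hik]
    rw [if_neg (fun hc => h2 hc.symm)]; norm_num
  set t : ℝ := Real.sqrt 6⁻¹ with ht
  have ht2 : t ^ 2 = 6⁻¹ := Real.sq_sqrt (by norm_num)
  set v : Fin n → ℝ := fun m => if m = i then t else if m = j then t else if m = k then -2 * t else 0 with hv
  have hvi : v i = t := by simp [hv]
  have hvj : v j = t := by simp [hv, (Ne.symm hij)]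
  have hvk : v k = -2 * t := by simp [hv, (Ne.symm hik), (Ne.symm hjk)]
  have hv0 : ∀ m, m ≠ i → m ≠ j → m ≠ k → v m = 0 := by
    intro m hmi hmj hmk; simp [hv, hmi, hmj, hmk]
  have hsset : ({i, j, k} : Finset (Fin n)) = insert i (insert j ({k} : Finset (Fin n))) := rfl
  have hsum3 : ∀ f : Fin n → ℝ, (∀ m, m ≠ i → m ≠ j → m ≠ k → f m = 0) →
      ∑ m, f m = f i + f j + f k := by
    intro f hf
    rw [← Finset.sum_subset (Finset.subset_univ ({i, j, k} : Finset (Fin n)))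
      (fun m _ hm => by
        simp only [Finset.mem_insert, Finset.mem_singleton, not_or] at hm
        exact hf m hm.1 hm.2.1 hm.2.2)]
    rw [hsset, Finset.sum_insert (by simp [hij, hik]),
      Finset.sum_insert (by simp [hjk]), Finset.sum_singleton]
    ring
  have hnorm : ∑ m, v m ^ 2 = 1 := by
    rw [hsum3 (fun m => v m ^ 2) (fun m h1 h2 h3 => by simp [hv0 m h1 h2 h3]),
      hvi, hvj, hvk]
    nlinarith [ht2]
  have hmean : ∑ m, v m = 0 := by
    rw [hsum3 v hv0, hvi, hvj, hvk]; ring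
  have hqval : ∑ a, ∑ b, (if a < b then M a b * v a * v b else 0) = 5 / 6 := by
    rw [half_sum n M hMd hMs v]
    have hinner : ∀ a : Fin n, ∑ b, M a b * v a * v b
        = M a i * v a * v i + M a j * v a * v j + M a k * v a * v k := by
      intro a
      exact hsum3 (fun b => M a b * v a * v b)
        (fun b hb1 hb2 hb3 => by simp [hv0 b hb1 hb2 hb3])
    have houter : ∑ a, ∑ b, M a b * v a * v b
        = (M i i * v i * v i + M i j * v i * v j + M i k * v i * v k)
        + (M j i * v j * v i + M j j * v j * v j + M j k * v j * v k)
        + (M k i * v k * v i + M k j * v k * v j + M k k * v k * v k) := by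
      rw [hsum3 (fun a => ∑ b, M a b * v a * v b)
        (fun a ha1 ha2 ha3 => by
          refine Finset.sum_eq_zero fun b _ => ?_
          simp [hv0 a ha1 ha2 ha3])]
      rw [hinner i, hinner j, hinner k]
    rw [houter, hMd i, hMd j, hMd k, hMs j i, hMs k i, hMs k j,
      hMij, hMjk, hMik, hvi, hvj, hvk]
    nlinarith [ht2]
  have hmem : (5 / 6 : ℝ) ∈ {q : ℝ | ∃ x : Fin n → ℝ, ∑ m, x m ^ 2 = 1 ∧ ∑ m, x m = 0 ∧
      q = ∑ a, ∑ b, if a < b then M a b * x a * x b else 0} :=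
    ⟨v, hnorm, hmean, hqval.symm⟩
  have hle : (5 / 6 : ℝ) ≤ Q n M := le_csSup (Q_bddAbove n M) hmem
  have hQ : Q n M ≤ 0 := h w hwpos
  linarith

theorem stmt_18 (n : ℕ) (l : Fin n → Fin n → ℝ)
    (h0 : ∀ x, l x x = 0) (hsymm : ∀ x y, l x y = l y x)
    (h : ∀ w : ℝ → ℝ, (∀ c, 0 < w c) →
      Q n (fun i j => if i = j then 0 else (w (l i j)) ^ 2) ≤ 0) :
    ∀ x y z : Fin n, x ≠ y → y ≠ z → x ≠ z →
      l x y = l y z ∧ l y z = l x z := by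
  intro x y z hxy hyz hxz
  constructor
  · by_contra hne
    by_cases hag : l x y = l x z
    · exact helper n l h0 hsymm h y z x hyz (Ne.symm hxz) (Ne.symm hxy)
        (by rw [hsymm z x]; rw [← hag]; exact fun hc => hne hc.symm)
        (by rw [hsymm y x]; exact fun hc => hne hc.symm)
    · exact helper n l h0 hsymm h x y z hxy hyz hxz hne hag
  · by_contra hne
    by_cases hab : l x y = l y z
    · exact helper n l h0 hsymm h x z y hxz (Ne.symm hyz) hxy
        (by rw [hsymm z y]; exact fun hc => hne hc.symm)
        (fun hc => hne (hab.symm.trans hc.symm))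
    · exact helper n l h0 hsymm h y z x hyz (Ne.symm hxz) (Ne.symm hxy)
        (by rw [hsymm z x]; exact fun hc => hne hc)
        (by rw [hsymm y x]; exact fun hc => hab hc.symm)
end
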